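/- arXiv:2001.00708 — 4 statements merged into one kernel-verified Lean document; each statement's English description precedes it below -/
import Mathlib

section
/- The set 𝒞 = {(W, μ) : W symmetric positive semidefinite, Θ₁(W, μ) ⪯ 0, μ > 0} is a convex subset of the real vector space of symmetric p×p matrices times ℝ: if (W¹, μ¹) ∈ 𝒞, (W², μ²) ∈ 𝒞 and α ∈ [0,1], then (αW¹ + (1−α)W², αμ¹ + (1−α)μ²) ∈ 𝒞. -/
open Matrix

/-- The extended matrix `F = [[A, −B₂],[0, 0]]`. -/
noncomputable def Fmat {n m : ℕ} (A : Matrix (Fin n) (Fin n) ℝ) (B₂ : Matrix (Fin n) (Fin m) ℝ) :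
    Matrix (Fin n ⊕ Fin m) (Fin n ⊕ Fin m) ℝ :=
  Matrix.fromBlocks A (-B₂) 0 0

/-- The extended matrix `Q = [[B₁B₁ᵀ, 0],[0, 0]]`. -/
noncomputable def Qmat {n m l : ℕ} (B₁ : Matrix (Fin n) (Fin l) ℝ) :
    Matrix (Fin n ⊕ Fin m) (Fin n ⊕ Fin m) ℝ :=
  Matrix.fromBlocks (B₁ * B₁ᵀ) 0 0 0

/-- The extended matrix `R = [[CᵀC, 0],[0, DᵀD]]`. -/
noncomputable def Rmat {n m q : ℕ} (C : Matrix (Fin q) (Fin n) ℝ) (D : Matrix (Fin q) (Fin m) ℝ) :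
    Matrix (Fin n ⊕ Fin m) (Fin n ⊕ Fin m) ℝ :=
  Matrix.fromBlocks (Cᵀ * C) 0 0 (Dᵀ * D)

/-- `Θ(W, μ) = FW + WFᵀ + WRW + μQ`. -/
noncomputable def Theta {n m l q : ℕ} (A : Matrix (Fin n) (Fin n) ℝ) (B₂ : Matrix (Fin n) (Fin m) ℝ)
    (B₁ : Matrix (Fin n) (Fin l) ℝ) (C : Matrix (Fin q) (Fin n) ℝ) (D : Matrix (Fin q) (Fin m) ℝ)
    (W : Matrix (Fin n ⊕ Fin m) (Fin n ⊕ Fin m) ℝ) (μ : ℝ) :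
    Matrix (Fin n ⊕ Fin m) (Fin n ⊕ Fin m) ℝ :=
  Fmat A B₂ * W + W * (Fmat A B₂)ᵀ + W * Rmat C D * W + μ • Qmat (m := m) B₁

/-- `Θ₁(W, μ)` is the top-left `n × n` block of `Θ(W, μ)`. -/
noncomputable def Theta1 {n m l q : ℕ} (A : Matrix (Fin n) (Fin n) ℝ) (B₂ : Matrix (Fin n) (Fin m) ℝ)
    (B₁ : Matrix (Fin n) (Fin l) ℝ) (C : Matrix (Fin q) (Fin n) ℝ) (D : Matrix (Fin q) (Fin m) ℝ)
    (W : Matrix (Fin n ⊕ Fin m) (Fin n ⊕ Fin m) ℝ) (μ : ℝ) : Matrix (Fin n) (Fin n) ℝ :=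
  (Theta A B₂ B₁ C D W μ).toBlocks₁₁


/-! `Θ` is affine in `(W, μ)` up to the quadratic term `WRW`, whose defect along a segment is
`α(1 - α)(W¹ - W²)R(W¹ - W²)`. Since `R ⪰ 0` this defect is positive semidefinite, so
`W ↦ Θ(W, μ)` is matrix-convex; hence so is its compression `Θ₁`, and its sublevel set
`Θ₁ ⪯ 0` is convex. The other conditions defining `𝒞` are convex cones. -/

theorem convexComb_mul_mul_convexComb {𝕜 R : Type*} [CommRing 𝕜] [Ring R] [Algebra 𝕜 R]
    (α : 𝕜) (X Y M : R) :
    (α • X + (1 - α) • Y) * M * (α • X + (1 - α) • Y) =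
      α • (X * M * X) + (1 - α) • (Y * M * Y) - (α * (1 - α)) • ((X - Y) * M * (X - Y)) := by
  simp only [mul_add, add_mul, mul_sub, sub_mul, smul_mul_assoc, mul_smul_comm]
  module

theorem Rmat_posSemidef {n m q : ℕ} (C : Matrix (Fin q) (Fin n) ℝ) (D : Matrix (Fin q) (Fin m) ℝ) :
    (Rmat C D).PosSemidef := by
  have h : Rmat C D = (fromBlocks C 0 0 D)ᴴ * fromBlocks C 0 0 D := by
    simp [Rmat, conjTranspose_eq_transpose_of_trivial, fromBlocks_transpose, fromBlocks_multiply]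
  rw [h]
  exact posSemidef_conjTranspose_mul_self _

section Theta

variable {n m l q : ℕ} (A : Matrix (Fin n) (Fin n) ℝ) (B₂ : Matrix (Fin n) (Fin m) ℝ)
  (B₁ : Matrix (Fin n) (Fin l) ℝ) (C : Matrix (Fin q) (Fin n) ℝ) (D : Matrix (Fin q) (Fin m) ℝ)
  (W₁ W₂ : Matrix (Fin n ⊕ Fin m) (Fin n ⊕ Fin m) ℝ) (μ₁ μ₂ α : ℝ)

theorem Theta_convexComb :
    Theta A B₂ B₁ C D (α • W₁ + (1 - α) • W₂) (α * μ₁ + (1 - α) * μ₂) =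
      α • Theta A B₂ B₁ C D W₁ μ₁ + (1 - α) • Theta A B₂ B₁ C D W₂ μ₂ -
        (α * (1 - α)) • ((W₁ - W₂) * Rmat C D * (W₁ - W₂)) := by
  unfold Theta
  rw [convexComb_mul_mul_convexComb]
  simp only [mul_add, add_mul, smul_mul_assoc, mul_smul_comm]
  module

theorem neg_Theta1_convexComb :
    -Theta1 A B₂ B₁ C D (α • W₁ + (1 - α) • W₂) (α * μ₁ + (1 - α) * μ₂) =
      α • -Theta1 A B₂ B₁ C D W₁ μ₁ + (1 - α) • -Theta1 A B₂ B₁ C D W₂ μ₂ +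
        (α * (1 - α)) • ((W₁ - W₂) * Rmat C D * (W₁ - W₂)).toBlocks₁₁ := by
  ext i j
  simp [Theta1, Theta_convexComb, toBlocks₁₁]
  ring

theorem neg_Theta1_convexComb_posSemidef (hW₁ : W₁.IsHermitian) (hW₂ : W₂.IsHermitian)
    (hΘ₁ : (-Theta1 A B₂ B₁ C D W₁ μ₁).PosSemidef) (hΘ₂ : (-Theta1 A B₂ B₁ C D W₂ μ₂).PosSemidef)
    (hα : α ∈ Set.Icc (0 : ℝ) 1) :
    (-Theta1 A B₂ B₁ C D (α • W₁ + (1 - α) • W₂) (α * μ₁ + (1 - α) * μ₂)).PosSemidef := by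
  obtain ⟨hα₀, hα₁⟩ := hα
  have hβ₀ : 0 ≤ 1 - α := sub_nonneg.2 hα₁
  have hdefect : ((W₁ - W₂) * Rmat C D * (W₁ - W₂)).toBlocks₁₁.PosSemidef := by
    have := (Rmat_posSemidef C D).mul_mul_conjTranspose_same (W₁ - W₂)
    rw [(hW₁.sub hW₂).eq] at this
    exact this.submatrix Sum.inl
  rw [neg_Theta1_convexComb]
  exact ((hΘ₁.smul hα₀).add (hΘ₂.smul hβ₀)).add (hdefect.smul (mul_nonneg hα₀ hβ₀))

end Theta

theorem stmt_1_general (n m l q : ℕ) (A : Matrix (Fin n) (Fin n) ℝ) (B₂ : Matrix (Fin n) (Fin m) ℝ)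
    (B₁ : Matrix (Fin n) (Fin l) ℝ) (C : Matrix (Fin q) (Fin n) ℝ) (D : Matrix (Fin q) (Fin m) ℝ)
    (W₁ W₂ : Matrix (Fin n ⊕ Fin m) (Fin n ⊕ Fin m) ℝ) (μ₁ μ₂ : ℝ)
    (hW₁ : W₁.PosSemidef) (hΘ₁ : (-(Theta1 A B₂ B₁ C D W₁ μ₁)).PosSemidef)
    (hμ₁ : 0 < μ₁)
    (hW₂ : W₂.PosSemidef) (hΘ₂ : (-(Theta1 A B₂ B₁ C D W₂ μ₂)).PosSemidef)
    (hμ₂ : 0 < μ₂)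
    (α : ℝ) (hα : α ∈ Set.Icc (0 : ℝ) 1) :
    (α • W₁ + (1 - α) • W₂).IsSymm ∧ (α • W₁ + (1 - α) • W₂).PosSemidef ∧
      (-(Theta1 A B₂ B₁ C D (α • W₁ + (1 - α) • W₂) (α * μ₁ + (1 - α) * μ₂))).PosSemidef ∧
      0 < α * μ₁ + (1 - α) * μ₂ := by
  have hβ₀ : 0 ≤ 1 - α := sub_nonneg.2 hα.2
  have hW : (α • W₁ + (1 - α) • W₂).PosSemidef := (hW₁.smul hα.1).add (hW₂.smul hβ₀)
  refine ⟨isHermitian_iff_isSymm.1 hW.isHermitian, hW,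
    neg_Theta1_convexComb_posSemidef A B₂ B₁ C D W₁ W₂ μ₁ μ₂ α hW₁.isHermitian hW₂.isHermitian
      hΘ₁ hΘ₂ hα, ?_⟩
  simpa only [smul_eq_mul, Set.mem_Ioi] using convex_Ioi (0 : ℝ) hμ₁ hμ₂ hα.1 hβ₀ (add_sub_cancel α 1)

/-- The set `𝒞 = {(W, μ) : W symmetric PSD, Θ₁(W, μ) ⪯ 0, μ > 0}` is convex. -/
theorem stmt_1 (n m l q : ℕ) (A : Matrix (Fin n) (Fin n) ℝ) (B₂ : Matrix (Fin n) (Fin m) ℝ)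
    (B₁ : Matrix (Fin n) (Fin l) ℝ) (C : Matrix (Fin q) (Fin n) ℝ) (D : Matrix (Fin q) (Fin m) ℝ)
    (W₁ W₂ : Matrix (Fin n ⊕ Fin m) (Fin n ⊕ Fin m) ℝ) (μ₁ μ₂ : ℝ)
    (hW₁s : W₁.IsSymm) (hW₁ : W₁.PosSemidef) (hΘ₁ : (-(Theta1 A B₂ B₁ C D W₁ μ₁)).PosSemidef)
    (hμ₁ : 0 < μ₁)
    (hW₂s : W₂.IsSymm) (hW₂ : W₂.PosSemidef) (hΘ₂ : (-(Theta1 A B₂ B₁ C D W₂ μ₂)).PosSemidef)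
    (hμ₂ : 0 < μ₂)
    (α : ℝ) (hα : α ∈ Set.Icc (0 : ℝ) 1) :
    (α • W₁ + (1 - α) • W₂).IsSymm ∧ (α • W₁ + (1 - α) • W₂).PosSemidef ∧
      (-(Theta1 A B₂ B₁ C D (α • W₁ + (1 - α) • W₂) (α * μ₁ + (1 - α) * μ₂))).PosSemidef ∧
      0 < α * μ₁ + (1 - α) * μ₂ :=
  stmt_1_general n m l q A B₂ B₁ C D W₁ W₂ μ₁ μ₂ hW₁ hΘ₁ hμ₁ hW₂ hΘ₂ hμ₂ α hα
end

section
/- Let A_c be an n×n real matrix, B₁ an n×l real matrix, C_c a q×n real matrix, γ > 0, and let P be a real symmetric positive definite n×n matrix satisfying A_cᵀP + PA_c + γ⁻²·PB₁B₁ᵀP + C_cᵀC_c ⪯ 0. If the pair (A_c, C_c) is observable, then A_c is Hurwitz, i.e., every eigenvalue λ ∈ ℂ of (the complexification of) A_c satisfies Re λ < 0. -/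
/-!
Let `v` be a complex eigenvector of `Aᶜ` with eigenvalue `λ`. Evaluating the complexified Riccati
inequality at `v` turns the Lyapunov part `AᶜᵀP + PAᶜ` into `2 Re λ · v*Pv`, so
`2 Re λ · v*Pv + γ⁻² ‖B₁ᵀPv‖² + ‖Cᶜv‖² ≤ 0`. Observability makes `‖Cᶜv‖² > 0` and `P ≻ 0` makes
`v*Pv > 0`, hence `Re λ < 0`.
-/

open Matrix

/-- The pair `(A, C)` is observable: no (complex) eigenvector of `A` lies in the kernel of `C`. -/
def IsObservablePair {n q : ℕ} (A : Matrix (Fin n) (Fin n) ℝ) (C : Matrix (Fin q) (Fin n) ℝ) :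
    Prop :=
  ∀ (lam : ℂ) (v : Fin n → ℂ), v ≠ 0 → (A.map Complex.ofReal).mulVec v = lam • v →
    (C.map Complex.ofReal).mulVec v ≠ 0

/-- A real square matrix is Hurwitz if every eigenvalue of its complexification has negative
real part. -/
def IsHurwitz {n : ℕ} (M : Matrix (Fin n) (Fin n) ℝ) : Prop :=
  ∀ (lam : ℂ) (v : Fin n → ℂ), v ≠ 0 → (M.map Complex.ofReal).mulVec v = lam • v → lam.re < 0

open scoped ComplexOrder

namespace Matrix

theorem star_dotProduct_conjTranspose_mul_self_mulVec {m n R : Type*} [Fintype m] [Fintype n]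
    [CommSemiring R] [StarRing R] (C : Matrix m n R) (v : n → R) :
    star v ⬝ᵥ (Cᴴ * C) *ᵥ v = star (C *ᵥ v) ⬝ᵥ C *ᵥ v := by
  rw [← mulVec_mulVec, dotProduct_mulVec, ← star_mulVec]

theorem re_lt_zero_of_lyapunov {n 𝕜 : Type*} [Fintype n] [RCLike 𝕜] {A P Q : Matrix n n 𝕜}
    (hP : P.PosDef) (hLyap : (-(Aᴴ * P + P * A + Q)).PosSemidef) {μ : 𝕜} {v : n → 𝕜}
    (hv : v ≠ 0) (hAv : A *ᵥ v = μ • v) (hQv : 0 < RCLike.re (star v ⬝ᵥ Q *ᵥ v)) :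
    RCLike.re μ < 0 := by
  set p := star v ⬝ᵥ P *ᵥ v
  have hp : 0 < RCLike.re p := hP.re_dotProduct_pos hv
  have hAP : star v ⬝ᵥ (Aᴴ * P) *ᵥ v = star μ * p := by
    rw [← mulVec_mulVec, dotProduct_mulVec, ← star_mulVec, hAv, star_smul, smul_dotProduct,
      smul_eq_mul]
  have hPA : star v ⬝ᵥ (P * A) *ᵥ v = μ * p := by
    rw [← mulVec_mulVec, hAv, mulVec_smul, dotProduct_smul, smul_eq_mul]
  have hLyap_v := hLyap.re_dotProduct_nonneg v
  simp only [neg_mulVec, add_mulVec, dotProduct_neg, dotProduct_add, hAP, hPA, map_neg,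
    map_add, RCLike.mul_re, RCLike.star_def, RCLike.conj_re, RCLike.conj_im] at hLyap_v
  nlinarith

section Complexification

variable {l m n : Type*}

theorem IsHermitian.map_ofReal {M : Matrix n n ℝ} (hM : M.IsHermitian) :
    (M.map Complex.ofReal).IsHermitian :=
  hM.map _ fun _ => (Complex.conj_ofReal _).symm

theorem map_ofReal_transpose (M : Matrix l m ℝ) :
    Mᵀ.map Complex.ofReal = (M.map Complex.ofReal)ᴴ := by
  ext
  simp

theorem map_ofReal_mul [Fintype m] (M : Matrix l m ℝ) (N : Matrix m n ℝ) :
    (M * N).map Complex.ofReal = M.map Complex.ofReal * N.map Complex.ofReal :=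
  Matrix.map_mul (f := Complex.ofRealHom)

variable [Fintype n]

theorem re_star_dotProduct_map_ofReal_mulVec (M : Matrix n n ℝ) (v : n → ℂ) :
    (star v ⬝ᵥ M.map Complex.ofReal *ᵥ v).re =
      (Complex.re ∘ v) ⬝ᵥ M *ᵥ (Complex.re ∘ v) + (Complex.im ∘ v) ⬝ᵥ M *ᵥ (Complex.im ∘ v) := by
  simp only [dotProduct, mulVec, map_apply, Pi.star_apply, Function.comp_apply, Finset.mul_sum,
    Complex.re_sum, ← Finset.sum_add_distrib]
  refine Finset.sum_congr rfl fun i _ => Finset.sum_congr rfl fun j _ => ?_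
  simp only [Complex.mul_re, Complex.mul_im, Complex.star_def, Complex.conj_re, Complex.conj_im,
    Complex.ofReal_re, Complex.ofReal_im]
  ring

theorem PosSemidef.map_ofReal {M : Matrix n n ℝ} (hM : M.PosSemidef) :
    (M.map Complex.ofReal).PosSemidef := by
  have hH := hM.isHermitian.map_ofReal
  refine .of_dotProduct_mulVec_nonneg hH fun v => Complex.nonneg_iff.mpr ⟨?_, ?_⟩
  · rw [re_star_dotProduct_map_ofReal_mulVec]
    simpa using add_nonneg (hM.dotProduct_mulVec_nonneg (Complex.re ∘ v))
      (hM.dotProduct_mulVec_nonneg (Complex.im ∘ v))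
  · exact (hH.im_star_dotProduct_mulVec_self v).symm

theorem PosDef.map_ofReal {M : Matrix n n ℝ} (hM : M.PosDef) :
    (M.map Complex.ofReal).PosDef := by
  have hH := hM.isHermitian.map_ofReal
  refine .of_dotProduct_mulVec_pos hH fun v hv => Complex.pos_iff.mpr ⟨?_, ?_⟩
  · rw [re_star_dotProduct_map_ofReal_mulVec]
    have hre := hM.posSemidef.dotProduct_mulVec_nonneg (Complex.re ∘ v)
    have him := hM.posSemidef.dotProduct_mulVec_nonneg (Complex.im ∘ v)
    simp only [star_trivial] at hre him
    by_cases h : Complex.re ∘ v = 0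
    · have h' : Complex.im ∘ v ≠ 0 := fun h' =>
        hv (funext fun i => Complex.ext (congrFun h i) (congrFun h' i))
      exact add_pos_of_nonneg_of_pos hre (by simpa using hM.dotProduct_mulVec_pos h')
    · exact add_pos_of_pos_of_nonneg (by simpa using hM.dotProduct_mulVec_pos h) him
  · exact (hH.im_star_dotProduct_mulVec_self v).symm

end Complexification

end Matrix

theorem stmt_6_general (n l q : ℕ) (Ac : Matrix (Fin n) (Fin n) ℝ) (B₁ : Matrix (Fin n) (Fin l) ℝ)
    (Cc : Matrix (Fin q) (Fin n) ℝ) (γ : ℝ)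
    (P : Matrix (Fin n) (Fin n) ℝ) (hP : P.PosDef)
    (hRic : (-(Acᵀ * P + P * Ac + (γ ^ 2)⁻¹ • (P * B₁ * B₁ᵀ * P) + Ccᵀ * Cc)).PosSemidef)
    (hObs : IsObservablePair Ac Cc) :
    IsHurwitz Ac := by
  intro μ v hv hAv
  set X := B₁ᵀ * P
  have hX : P * B₁ * B₁ᵀ * P = Xᵀ * X := by
    rw [transpose_mul, ← conjTranspose_eq_transpose_of_trivial P, hP.isHermitian.eq,
      transpose_transpose, Matrix.mul_assoc]
  refine re_lt_zero_of_lyapunov (Q := ((γ ^ 2)⁻¹ • (Xᵀ * X) + Ccᵀ * Cc).map Complex.ofReal)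
    hP.map_ofReal ?_ hv hAv ?_
  · have hRic_ℂ := hRic.map_ofReal
    rw [hX, add_assoc] at hRic_ℂ
    simpa [Matrix.map_add, Matrix.map_neg, map_ofReal_mul, map_ofReal_transpose] using hRic_ℂ
  · have hB : 0 ≤ (star v ⬝ᵥ ((γ ^ 2)⁻¹ • (Xᵀ * X)).map Complex.ofReal *ᵥ v).re :=
      ((posSemidef_conjTranspose_mul_self X).smul (inv_nonneg.mpr (sq_nonneg γ))).map_ofReal
        |>.re_dotProduct_nonneg v
    have hC : 0 < (star v ⬝ᵥ (Ccᵀ * Cc).map Complex.ofReal *ᵥ v).re := by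
      rw [map_ofReal_mul, map_ofReal_transpose, star_dotProduct_conjTranspose_mul_self_mulVec]
      exact (Complex.pos_iff.mp (dotProduct_star_self_pos_iff.mpr (hObs μ v hv hAv))).1
    simpa [Matrix.map_add, add_mulVec] using add_pos_of_nonneg_of_pos hB hC

/-- If `P ≻ 0` is symmetric and satisfies the Riccati inequality
`AᶜᵀP + PAᶜ + γ⁻²·PB₁B₁ᵀP + CᶜᵀCᶜ ⪯ 0` with `γ > 0`, and `(Aᶜ, Cᶜ)` is observable,
then `Aᶜ` is Hurwitz. -/
theorem stmt_6 (n l q : ℕ) (Ac : Matrix (Fin n) (Fin n) ℝ) (B₁ : Matrix (Fin n) (Fin l) ℝ)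
    (Cc : Matrix (Fin q) (Fin n) ℝ) (γ : ℝ) (hγ : 0 < γ)
    (P : Matrix (Fin n) (Fin n) ℝ) (hPsymm : P.IsSymm) (hP : P.PosDef)
    (hRic : (-(Acᵀ * P + P * Ac + (γ ^ 2)⁻¹ • (P * B₁ * B₁ᵀ * P) + Ccᵀ * Cc)).PosSemidef)
    (hObs : IsObservablePair Ac Cc) :
    IsHurwitz Ac :=
  stmt_6_general n l q Ac B₁ Cc γ P hP hRic hObs
end

section
/- Suppose the pair (A, C) is observable, CᵀD = 0, and DᵀD is positive definite. Then for every m×n real matrix K and every n×m real matrix B₂, the pair (A − B₂K, C − DK) is observable. -/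
open Matrix

lemma mapC_mul {a b c : ℕ} (M : Matrix (Fin a) (Fin b) ℝ) (N : Matrix (Fin b) (Fin c) ℝ) :
    (M * N).map Complex.ofReal = M.map Complex.ofReal * N.map Complex.ofReal := by
  ext i j
  simp [Matrix.mul_apply]

lemma mapC_sub {a b : ℕ} (M N : Matrix (Fin a) (Fin b) ℝ) :
    (M - N).map Complex.ofReal = M.map Complex.ofReal - N.map Complex.ofReal := by
  ext i j
  simp

lemma mapC_det {a : ℕ} (M : Matrix (Fin a) (Fin a) ℝ) :
    (M.map Complex.ofReal).det = (M.det : ℂ) := by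
  rw [show (Complex.ofReal : ℝ → ℂ) = ⇑Complex.ofRealHom from rfl,
    ← RingHom.mapMatrix_apply, ← RingHom.map_det]

/-- If `(A, C)` is observable, `CᵀD = 0`, and `DᵀD ≻ 0`, then for every gain
`K` and input matrix `B₂`, the pair `(A − B₂K, C − DK)` is observable. -/
theorem stmt_10 (n m q : ℕ) (A : Matrix (Fin n) (Fin n) ℝ) (C : Matrix (Fin q) (Fin n) ℝ)
    (D : Matrix (Fin q) (Fin m) ℝ) (hObs : IsObservablePair A C) (hCD : Cᵀ * D = 0)
    (hDD : (Dᵀ * D).PosDef) :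
    ∀ (K : Matrix (Fin m) (Fin n) ℝ) (B₂ : Matrix (Fin n) (Fin m) ℝ),
      IsObservablePair (A - B₂ * K) (C - D * K) := by
  intro K B₂ lam v hv heig hC
  have hdet : ((Dᵀ * D).map Complex.ofReal).det ≠ 0 := by
    rw [mapC_det]
    exact_mod_cast ne_of_gt hDD.det_pos
  have hunit : IsUnit ((Dᵀ * D).map Complex.ofReal) := by
    rwa [Matrix.isUnit_iff_isUnit_det, isUnit_iff_ne_zero]
  have hC' : (C.map Complex.ofReal).mulVec v = ((D * K).map Complex.ofReal).mulVec v := by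
    rw [mapC_sub, Matrix.sub_mulVec, sub_eq_zero] at hC
    exact hC
  have hKv : (K.map Complex.ofReal).mulVec v = 0 := by
    have h1 := congrArg ((Dᵀ).map Complex.ofReal).mulVec hC'
    rw [Matrix.mulVec_mulVec, Matrix.mulVec_mulVec, ← mapC_mul, ← mapC_mul,
      ← Matrix.mul_assoc] at h1
    have h2 : (Dᵀ * C : Matrix (Fin m) (Fin n) ℝ) = 0 := by
      have := congrArg Matrix.transpose hCD
      simpa [Matrix.transpose_mul] using this
    rw [h2] at h1
    have h3 : ((Dᵀ * D * K).map Complex.ofReal).mulVec v = 0 := by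
      rw [← h1]
      simp
    rw [mapC_mul, ← Matrix.mulVec_mulVec] at h3
    have hinj := Matrix.mulVec_injective_iff_isUnit.2 hunit
    have h4 : ((Dᵀ * D).map Complex.ofReal).mulVec ((K.map Complex.ofReal).mulVec v) =
        ((Dᵀ * D).map Complex.ofReal).mulVec 0 := by
      rw [h3, Matrix.mulVec_zero]
    exact hinj h4
  have hCv : (C.map Complex.ofReal).mulVec v = 0 := by
    rw [hC', mapC_mul, ← Matrix.mulVec_mulVec, hKv, Matrix.mulVec_zero]
  have hAv : (A.map Complex.ofReal).mulVec v = lam • v := by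
    rw [mapC_sub, Matrix.sub_mulVec, mapC_mul, ← Matrix.mulVec_mulVec, hKv,
      Matrix.mulVec_zero, sub_zero] at heig
    exact heig
  exact hObs lam v hv hAv hCv
end

section
/- Let X be a real symmetric n×n matrix with eigenvalue decomposition X = Σ_{i=1}^n λᵢ·vᵢvᵢᵀ, where λ₁, …, λₙ are the eigenvalues of X and v₁, …, vₙ is a corresponding orthonormal basis of eigenvectors. Define X₊ = Σ_{i=1}^n max{λᵢ, 0}·vᵢvᵢᵀ. Then X₊ is symmetric positive semidefinite, and for every symmetric positive semidefinite n×n real matrix Y one has ‖X − X₊‖_F ≤ ‖X − Y‖_F, with equality only if Y = X₊; that is, X₊ is the unique Frobenius-norm projection of X onto the cone of symmetric positive semidefinite matrices. -/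
open Matrix

/-- The Frobenius norm `‖M‖_F = √(Tr(MᵀM))` of a real matrix. -/
noncomputable def frobNorm {a b : ℕ} (M : Matrix (Fin a) (Fin b) ℝ) : ℝ :=
  Real.sqrt (Matrix.trace (Mᵀ * M))

/-!
Conjugating by the orthogonal matrix `P` whose rows are the `vᵢ` turns `X` into `diagonal λ` and
`X₊` into `diagonal λ⁺`; it preserves both the Frobenius norm and positive semidefiniteness, so
it suffices to project `diagonal λ`. A PSD matrix `Z` has nonnegative diagonal, and then
`diagonal λ - Z` is entrywise at least as large in absolute value as `diagonal λ - diagonal λ⁺`: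
off the diagonal the former has `-Z i j` against `0`, and on it `(λᵢ - z)²` over `z ≥ 0` is
minimized exactly at `z = max λᵢ 0`.
-/

lemma sq_sub_max_zero_le {l z : ℝ} (hz : 0 ≤ z) : (l - max l 0) ^ 2 ≤ (l - z) ^ 2 := by
  rcases le_total 0 l with hl | hl
  · rw [max_eq_left hl, sub_self, zero_pow two_ne_zero]
    positivity
  · rw [max_eq_right hl]
    nlinarith

lemma eq_max_zero_of_sq_sub_eq {l z : ℝ} (hz : 0 ≤ z) (h : (l - max l 0) ^ 2 = (l - z) ^ 2) :
    z = max l 0 := by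
  rcases le_total 0 l with hl | hl
  · rw [max_eq_left hl, sub_self] at *
    nlinarith [sq_nonneg (l - z)]
  · rw [max_eq_right hl] at *
    nlinarith

lemma trace_transpose_mul_self_eq_sum_sq {m n : Type*} [Fintype m] [Fintype n]
    (M : Matrix m n ℝ) : trace (Mᵀ * M) = ∑ i, ∑ j, M i j ^ 2 := by
  simp only [trace, diag_apply, mul_apply, transpose_apply, sq]
  exact Finset.sum_comm

lemma frobNorm_le_of_sq_le {a b : ℕ} {M N : Matrix (Fin a) (Fin b) ℝ}
    (h : ∀ i j, M i j ^ 2 ≤ N i j ^ 2) : frobNorm M ≤ frobNorm N := by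
  simp only [frobNorm, trace_transpose_mul_self_eq_sum_sq]
  exact Real.sqrt_le_sqrt (Finset.sum_le_sum fun i _ => Finset.sum_le_sum fun j _ => h i j)

lemma sq_eq_of_frobNorm_eq {a b : ℕ} {M N : Matrix (Fin a) (Fin b) ℝ}
    (h : ∀ i j, M i j ^ 2 ≤ N i j ^ 2) (heq : frobNorm M = frobNorm N) (i : Fin a) (j : Fin b) :
    M i j ^ 2 = N i j ^ 2 := by
  simp only [frobNorm, trace_transpose_mul_self_eq_sum_sq] at heq
  rw [Real.sqrt_inj (by positivity) (by positivity),
    Finset.sum_eq_sum_iff_of_le fun i _ => Finset.sum_le_sum fun j _ => h i j] at heq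
  exact (Finset.sum_eq_sum_iff_of_le fun j _ => h i j).mp (heq i (Finset.mem_univ i)) j
    (Finset.mem_univ j)

lemma frobNorm_transpose_mul_mul {n : ℕ} {P : Matrix (Fin n) (Fin n) ℝ} (hP : P * Pᵀ = 1)
    (M : Matrix (Fin n) (Fin n) ℝ) : frobNorm (Pᵀ * M * P) = frobNorm M := by
  have : (Pᵀ * M * P)ᵀ * (Pᵀ * M * P) = Pᵀ * (Mᵀ * M) * P := by
    simp only [transpose_mul, transpose_transpose, Matrix.mul_assoc]
    rw [← Matrix.mul_assoc P, hP, Matrix.one_mul]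
  rw [frobNorm, frobNorm, this, trace_mul_cycle, ← Matrix.mul_assoc, hP, Matrix.one_mul]

lemma of_mul_transpose_of_eq_one {ι R : Type*} [Fintype ι] [DecidableEq ι] [CommSemiring R]
    {v : ι → ι → R} (hv : ∀ i j, v i ⬝ᵥ v j = if i = j then 1 else 0) :
    of v * (of v)ᵀ = 1 := by
  ext i j
  rw [mul_apply', one_apply, ← hv]
  rfl

lemma sum_smul_vecMulVec_self_eq {m n R : Type*} [Fintype m] [DecidableEq m] [CommSemiring R]
    (c : m → R) (v : m → n → R) :
    ∑ k, c k • vecMulVec (v k) (v k) = (of v)ᵀ * diagonal c * of v := by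
  ext i j
  rw [mul_apply]
  simp only [Matrix.sum_apply, Matrix.smul_apply, vecMulVec_apply, mul_diagonal, transpose_apply,
    of_apply, smul_eq_mul]
  exact Finset.sum_congr rfl fun k _ => by ring

section DiagonalProjection

variable {n : ℕ} (lam : Fin n → ℝ) {Z : Matrix (Fin n) (Fin n) ℝ}

lemma sq_diagonal_sub_diagonal_max_apply_le (hZ : ∀ i, 0 ≤ Z i i) (i j : Fin n) :
    (diagonal lam - diagonal fun i => max (lam i) 0) i j ^ 2 ≤ (diagonal lam - Z) i j ^ 2 := by
  rcases eq_or_ne i j with rfl | hij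
  · simpa only [Matrix.sub_apply, diagonal_apply_eq] using sq_sub_max_zero_le (hZ i)
  · simp [diagonal_apply_ne _ hij, sq_nonneg]

lemma frobNorm_diagonal_sub_diagonal_max_le (hZ : ∀ i, 0 ≤ Z i i) :
    frobNorm (diagonal lam - diagonal fun i => max (lam i) 0) ≤ frobNorm (diagonal lam - Z) :=
  frobNorm_le_of_sq_le (sq_diagonal_sub_diagonal_max_apply_le lam hZ)

lemma eq_diagonal_max_of_frobNorm_eq (hZ : ∀ i, 0 ≤ Z i i)
    (heq : frobNorm (diagonal lam - diagonal fun i => max (lam i) 0) =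
      frobNorm (diagonal lam - Z)) :
    Z = diagonal fun i => max (lam i) 0 := by
  ext i j
  have hsq := sq_eq_of_frobNorm_eq (sq_diagonal_sub_diagonal_max_apply_le lam hZ) heq i j
  rcases eq_or_ne i j with rfl | hij
  · simp only [Matrix.sub_apply, diagonal_apply_eq] at hsq ⊢
    exact eq_max_zero_of_sq_sub_eq (hZ i) hsq
  · simpa [diagonal_apply_ne _ hij, eq_comm] using hsq

end DiagonalProjection

theorem stmt_16_general (n : ℕ) (X : Matrix (Fin n) (Fin n) ℝ)
    (lam : Fin n → ℝ) (v : Fin n → (Fin n → ℝ))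
    (hortho : ∀ i j, v i ⬝ᵥ v j = if i = j then (1 : ℝ) else 0)
    (hdecomp : X = ∑ i, lam i • Matrix.vecMulVec (v i) (v i))
    (Xp : Matrix (Fin n) (Fin n) ℝ)
    (hXp : Xp = ∑ i, max (lam i) 0 • Matrix.vecMulVec (v i) (v i)) :
    Xp.IsSymm ∧ Xp.PosSemidef ∧
      ∀ Y : Matrix (Fin n) (Fin n) ℝ, Y.IsSymm → Y.PosSemidef →
        frobNorm (X - Xp) ≤ frobNorm (X - Y) ∧
        (frobNorm (X - Xp) = frobNorm (X - Y) → Y = Xp) := by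
  set P := of v
  have hP : P * Pᵀ = 1 := of_mul_transpose_of_eq_one hortho
  have hPt : Pᵀ * P = 1 := mul_eq_one_comm.mp hP
  rw [sum_smul_vecMulVec_self_eq] at hdecomp hXp
  have hXpPSD : Xp.PosSemidef := hXp ▸ by
    simpa using (posSemidef_diagonal_iff.mpr fun i => le_max_right (lam i) 0)
      |>.conjTranspose_mul_mul_same P
  refine ⟨isHermitian_iff_isSymm.mp hXpPSD.isHermitian, hXpPSD, fun Y _ hY => ?_⟩
  obtain ⟨Z, hZ, rfl⟩ : ∃ Z : Matrix (Fin n) (Fin n) ℝ, Z.PosSemidef ∧ Y = Pᵀ * Z * P :=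
    ⟨P * Y * Pᵀ, by simpa using hY.conjTranspose_mul_mul_same Pᵀ,
      by rw [← Matrix.mul_assoc, ← Matrix.mul_assoc, hPt, Matrix.one_mul, Matrix.mul_assoc, hPt,
        Matrix.mul_one]⟩
  have hconj (A B : Matrix (Fin n) (Fin n) ℝ) : Pᵀ * A * P - Pᵀ * B * P = Pᵀ * (A - B) * P := by
    rw [Matrix.mul_sub, Matrix.sub_mul]
  rw [hdecomp, hXp, hconj, hconj, frobNorm_transpose_mul_mul hP, frobNorm_transpose_mul_mul hP]
  exact ⟨frobNorm_diagonal_sub_diagonal_max_le lam fun _ => hZ.diag_nonneg,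
    fun heq => by rw [eq_diagonal_max_of_frobNorm_eq lam (fun _ => hZ.diag_nonneg) heq]⟩

/-- Let `X = Σ λᵢ·vᵢvᵢᵀ` be an eigenvalue decomposition of the real symmetric
matrix `X` with orthonormal eigenvectors `vᵢ`, and set `X₊ = Σ max{λᵢ,0}·vᵢvᵢᵀ`. Then `X₊` is
symmetric PSD and is the unique Frobenius-norm projection of `X` onto the PSD cone: for any PSD
`Y`, `‖X − X₊‖_F ≤ ‖X − Y‖_F`, with equality only if `Y = X₊`. -/
theorem stmt_16 (n : ℕ) (X : Matrix (Fin n) (Fin n) ℝ) (hX : X.IsSymm)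
    (lam : Fin n → ℝ) (v : Fin n → (Fin n → ℝ))
    (hortho : ∀ i j, v i ⬝ᵥ v j = if i = j then (1 : ℝ) else 0)
    (heig : ∀ i, X.mulVec (v i) = lam i • v i)
    (hdecomp : X = ∑ i, lam i • Matrix.vecMulVec (v i) (v i))
    (Xp : Matrix (Fin n) (Fin n) ℝ)
    (hXp : Xp = ∑ i, max (lam i) 0 • Matrix.vecMulVec (v i) (v i)) :
    Xp.IsSymm ∧ Xp.PosSemidef ∧
      ∀ Y : Matrix (Fin n) (Fin n) ℝ, Y.IsSymm → Y.PosSemidef →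
        frobNorm (X - Xp) ≤ frobNorm (X - Y) ∧
        (frobNorm (X - Xp) = frobNorm (X - Y) → Y = Xp) :=
  stmt_16_general n X lam v hortho hdecomp Xp hXp
end
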